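/- arXiv:2303.13628 — 2 statements merged into one kernel-verified Lean document; each statement's English description precedes it below -/
import Mathlib

section
/- Let γ ≥ 10 be a real number, let s₁ ≤ s₂ ≤ s₃ ≤ s₄ be natural numbers, and let q₁, q₂, q₃, q₄ be real numbers such that q₁ + q₂ + q₃ + q₄ = 0, |q_i| ≤ √2 · γ^(−s_i) for i = 1, 2, 3, 4, and |q₁| ≥ γ^(−s₁−1). Then s₂ ≤ s₁ + 1. -/
/-! If `s₂ ≥ s₁ + 2`, momentum conservation bounds `|q₁| = |q₂ + q₃ + q₄|` by
`3√2 γ^(-s₂) ≤ 3√2 γ^(-s₁-2)`, which is smaller than the lower bound `γ^(-s₁-1)` because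
`3√2 < γ`. -/

theorem abs_le_three_mul_of_add_eq_zero {q₁ q₂ q₃ q₄ B : ℝ} (hsum : q₁ + q₂ + q₃ + q₄ = 0)
    (h₂ : |q₂| ≤ B) (h₃ : |q₃| ≤ B) (h₄ : |q₄| ≤ B) : |q₁| ≤ 3 * B := by
  rw [show q₁ = -(q₂ + q₃ + q₄) by linarith, abs_neg]
  linarith [abs_add_three q₂ q₃ q₄]

theorem mul_rpow_neg_lt_rpow_neg_sub_one {c γ : ℝ} (hc0 : 0 ≤ c) (hγ : 1 ≤ γ) (hc : c < γ)
    {s t : ℕ} (hst : s + 2 ≤ t) : c * γ ^ (-(t : ℝ)) < γ ^ (-(s : ℝ) - 1) := by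
  have hts : -(t : ℝ) ≤ -(s : ℝ) - 2 := by
    have : (s : ℝ) + 2 ≤ t := by exact_mod_cast hst
    linarith
  calc c * γ ^ (-(t : ℝ)) ≤ c * γ ^ (-(s : ℝ) - 2) := by gcongr
    _ < γ ^ (-(s : ℝ) - 2) * γ := by rw [mul_comm]; gcongr
    _ = γ ^ (-(s : ℝ) - 1) := by
      rw [← Real.rpow_add_one (by positivity)]
      ring_nf

theorem sector_indices_two_smallest_close_general
    (γ : ℝ) (hγ : 10 ≤ γ)
    (s₁ s₂ s₃ s₄ : ℕ) (h23 : s₂ ≤ s₃) (h34 : s₃ ≤ s₄)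
    (q₁ q₂ q₃ q₄ : ℝ)
    (hsum : q₁ + q₂ + q₃ + q₄ = 0)
    (hb₂ : |q₂| ≤ Real.sqrt 2 * γ ^ (-(s₂ : ℝ)))
    (hb₃ : |q₃| ≤ Real.sqrt 2 * γ ^ (-(s₃ : ℝ)))
    (hb₄ : |q₄| ≤ Real.sqrt 2 * γ ^ (-(s₄ : ℝ)))
    (hlow : γ ^ (-(s₁ : ℝ) - 1) ≤ |q₁|) :
    s₂ ≤ s₁ + 1 := by
  by_contra! h
  have hγ1 : 1 ≤ γ := by linarith
  have hsqrt : √2 < 2 := by rw [Real.sqrt_lt' two_pos]; norm_num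
  have hb₃' : |q₃| ≤ √2 * γ ^ (-(s₂ : ℝ)) := hb₃.trans (by gcongr)
  have hb₄' : |q₄| ≤ √2 * γ ^ (-(s₂ : ℝ)) := hb₄.trans (by gcongr; exact h23.trans h34)
  have hup := abs_le_three_mul_of_add_eq_zero hsum hb₂ hb₃' hb₄'
  have hgap := mul_rpow_neg_lt_rpow_neg_sub_one (c := 3 * √2) (by positivity) hγ1
    (by linarith) (show s₁ + 2 ≤ s₂ by omega)
  linarith

/-- Quantitative core of the conservation-of-momentum sector lemma (Lemma 2.1):
at a quartic vertex, the two smallest sector indices differ by at most 1. -/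
theorem sector_indices_two_smallest_close
    (γ : ℝ) (hγ : 10 ≤ γ)
    (s₁ s₂ s₃ s₄ : ℕ) (h12 : s₁ ≤ s₂) (h23 : s₂ ≤ s₃) (h34 : s₃ ≤ s₄)
    (q₁ q₂ q₃ q₄ : ℝ)
    (hsum : q₁ + q₂ + q₃ + q₄ = 0)
    (hb₁ : |q₁| ≤ Real.sqrt 2 * γ ^ (-(s₁ : ℝ)))
    (hb₂ : |q₂| ≤ Real.sqrt 2 * γ ^ (-(s₂ : ℝ)))
    (hb₃ : |q₃| ≤ Real.sqrt 2 * γ ^ (-(s₃ : ℝ)))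
    (hb₄ : |q₄| ≤ Real.sqrt 2 * γ ^ (-(s₄ : ℝ)))
    (hlow : γ ^ (-(s₁ : ℝ) - 1) ≤ |q₁|) :
    s₂ ≤ s₁ + 1 :=
  sector_indices_two_smallest_close_general γ hγ s₁ s₂ s₃ s₄ h23 h34 q₁ q₂ q₃ q₄ hsum hb₂ hb₃ hb₄
    hlow
end

section
/- There exists a constant K > 0 such that the following holds for every real γ ≥ 10 and all natural numbers j ≥ 1 and j₀ ≥ 0. Let S be the set of pairs of natural numbers σ = (s₊, s₋) with 2s₊ ≥ j − j₀, 2s₋ ≥ j − j₀, s₊ ≤ j, s₋ ≤ j, and 2(s₊ + s₋) ≥ 3j − j₀, and for σ ∈ S set l(σ) = s₊ + s₋ − 3j/2 + j₀/2 (a nonnegative rational). Call a quadruple (σ₁, σ₂, σ₃, σ₄) ∈ S⁴ admissible if for each direction ε ∈ {+, −}, writing t_ε = min_{1 ≤ i ≤ 4} s_{i,ε}, either at least two indices i ∈ {1,2,3,4} satisfy s_{i,ε} ≤ t_ε + 1, or t_ε = j. Then for every fixed σ₄ ∈ S, the sum over all (σ₁, σ₂, σ₃) ∈ S³ with (σ₁,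 σ₂, σ₃, σ₄) admissible of γ^(−(l(σ₁) + l(σ₂) + l(σ₃))/4) is at most K · (j + j₀ + 1). -/
open Finset

/-- The set of sector indices `σ = (s₊, s₋)` at shell scale `j` (with parameter `j₀`):
`2 s₊ ≥ j − j₀`, `2 s₋ ≥ j − j₀`, `s₊ ≤ j`, `s₋ ≤ j` and `2(s₊ + s₋) ≥ 3 j − j₀`. -/
def sectorSet (j j₀ : ℕ) : Finset (ℕ × ℕ) :=
  (Finset.range (j + 1) ×ˢ Finset.range (j + 1)).filter
    (fun σ => j ≤ 2 * σ.1 + j₀ ∧ j ≤ 2 * σ.2 + j₀ ∧ 3 * j ≤ 2 * (σ.1 + σ.2) + j₀)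

/-- The depth `l(σ) = s₊ + s₋ − 3j/2 + j₀/2` of a sector. -/
noncomputable def depth (j j₀ : ℕ) (σ : ℕ × ℕ) : ℝ :=
  (σ.1 : ℝ) + (σ.2 : ℝ) - 3 * (j : ℝ) / 2 + (j₀ : ℝ) / 2

/-- Admissibility in one direction: writing `t` for the minimum of the four sector
indices, either at least two of them are `≤ t + 1`, or `t = j`. -/
def admDir (j a b c d : ℕ) : Prop :=
  2 ≤ ((if a ≤ min (min a b) (min c d) + 1 then 1 else 0)
      + (if b ≤ min (min a b) (min c d) + 1 then 1 else 0)
      + (if c ≤ min (min a b) (min c d) + 1 then 1 else 0)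
      + (if d ≤ min (min a b) (min c d) + 1 then 1 else 0) : ℕ)
    ∨ min (min a b) (min c d) = j

/-- A quadruple of sectors is admissible if it is admissible in both directions. -/
def admissible (j : ℕ) (σ₁ σ₂ σ₃ σ₄ : ℕ × ℕ) : Prop :=
  admDir j σ₁.1 σ₂.1 σ₃.1 σ₄.1 ∧ admDir j σ₁.2 σ₂.2 σ₃.2 σ₄.2

instance (j a b c d : ℕ) : Decidable (admDir j a b c d) := by
  unfold admDir; infer_instance

instance (j : ℕ) (σ₁ σ₂ σ₃ σ₄ : ℕ × ℕ) : Decidable (admissible j σ₁ σ₂ σ₃ σ₄) := by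
  unfold admissible; infer_instance


/-!
The weight `γ^(-l/4)` of a sector is at most `(3/4)^(2l)`, and `2l` is a natural number. A set of
sectors told apart by `2l` together with a second index that is at most `2l + k` has weight at
most `4k + 16`. Hence the whole sector set has weight `O(j)`, while a band of sectors whose first
(or second) index exceeds a fixed `c` by at most about their depth has weight `O(1)`.

Admissibility puts, in each direction, two of the four sectors within one of the minimum. A sector
within one of both minima dominates every other sector up to one, and two sectors within one of
the same minimum agree up to one in that coordinate. So among `σ₁, σ₂, σ₃` there is a center such
that each of the other two is tied to the center or to `σ₄`, and then lies in one of four bands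
fixed by those two. Summing the center over all sectors and the other two over their bands gives
`O(j) · O(1)²`.
-/

theorem sum_pow_le_of_injOn {α : Type*} {A : Finset α} {φ : α → ℕ × ℕ} {k : ℕ} {q M : ℝ}
    (hq : 0 ≤ q) (hφ : Set.InjOn φ A) (hk : ∀ x ∈ A, (φ x).2 ≤ (φ x).1 + k)
    (hM : HasSum (fun n : ℕ => ((n : ℝ) + k + 1) * q ^ n) M) :
    ∑ x ∈ A, q ^ (φ x).1 ≤ M := by
  classical
  have hfiber : ∀ n, #{x ∈ A | (φ x).1 = n} ≤ n + k + 1 := by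
    intro n
    simpa using card_le_card_of_injOn (t := range (n + k + 1)) (fun x => (φ x).2)
      (fun x hx => by
        have := hk x (mem_filter.1 hx).1
        have := (mem_filter.1 hx).2
        simp only [coe_range, Set.mem_Iio]
        omega)
      (fun x hx y hy hxy => hφ (mem_filter.1 hx).1 (mem_filter.1 hy).1 <|
        Prod.ext ((mem_filter.1 hx).2.trans (mem_filter.1 hy).2.symm) hxy)
  calc ∑ x ∈ A, q ^ (φ x).1
      = ∑ n ∈ A.image fun x => (φ x).1, #{x ∈ A | (φ x).1 = n} • q ^ n := sum_comp _ _
    _ ≤ ∑ n ∈ A.image fun x => (φ x).1, ((n : ℝ) + k + 1) * q ^ n := by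
        refine sum_le_sum fun n _ => ?_
        rw [nsmul_eq_mul]
        gcongr
        exact_mod_cast hfiber n
    _ ≤ M := sum_le_hasSum _ (fun n _ => by positivity) hM

theorem hasSum_add_mul_three_quarters_pow (k : ℕ) :
    HasSum (fun n : ℕ => ((n : ℝ) + k + 1) * (3 / 4 : ℝ) ^ n) (4 * k + 16) := by
  have hgeom := hasSum_geometric_of_lt_one (r := (3 / 4 : ℝ)) (by norm_num) (by norm_num)
  have hcoe := hasSum_coe_mul_geometric_of_norm_lt_one (r := (3 / 4 : ℝ)) (by norm_num)
  have hval : (3 / 4 : ℝ) / (1 - 3 / 4) ^ 2 + ((k : ℝ) + 1) * (1 - 3 / 4)⁻¹ = 4 * k + 16 := by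
    norm_num; ring
  have hfun : (fun n : ℕ => (n : ℝ) * (3 / 4 : ℝ) ^ n + ((k : ℝ) + 1) * (3 / 4 : ℝ) ^ n) =
      fun n : ℕ => ((n : ℝ) + k + 1) * (3 / 4 : ℝ) ^ n := by
    funext n; ring
  simpa only [hval, hfun] using hcoe.add (hgeom.mul_left ((k : ℝ) + 1))

theorem rpow_neg_one_eighth_le {γ : ℝ} (hγ : 10 ≤ γ) : γ ^ (-(1 / 8 : ℝ)) ≤ 3 / 4 := by
  calc γ ^ (-(1 / 8 : ℝ)) ≤ ((4 / 3 : ℝ) ^ (8 : ℕ)) ^ (-(1 / 8 : ℝ)) :=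
        Real.rpow_le_rpow_of_nonpos (by positivity) (by norm_num; linarith) (by norm_num)
    _ = 3 / 4 := by
        rw [← Real.rpow_natCast, ← Real.rpow_mul (by norm_num)]
        norm_num

theorem sum_filter_or_le {α : Type*} {s : Finset α} {f : α → ℝ} (hf : ∀ x ∈ s, 0 ≤ f x)
    (p q : α → Prop) [DecidablePred p] [DecidablePred q] :
    ∑ x ∈ s with p x ∨ q x, f x ≤ ∑ x ∈ s with p x, f x + ∑ x ∈ s with q x, f x := by
  simp only [sum_filter, ← sum_add_distrib]
  refine sum_le_sum fun x hx => ?_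
  have := hf x hx
  split_ifs <;> simp_all

theorem sum_triple_le_of_exists_center {α : Type*} {S : Finset α} {w : α → ℝ}
    (hw : ∀ x ∈ S, 0 ≤ w x) {r : α → α → Prop} [DecidableRel r] {C : ℝ}
    (hr : ∀ x ∈ S, ∑ y ∈ S with r x y, w y ≤ C) {P : α × α × α → Prop} [DecidablePred P]
    (hP : ∀ x ∈ S, ∀ y ∈ S, ∀ z ∈ S, P (x, y, z) →
      (r x y ∧ r x z) ∨ (r y x ∧ r y z) ∨ (r z x ∧ r z y)) :
    ∑ t ∈ (S ×ˢ S ×ˢ S).filter P, w t.1 * w t.2.1 * w t.2.2 ≤ 3 * C ^ 2 * ∑ x ∈ S, w x := by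
  set c : α → α → α → ℝ := fun x y z => if r x y ∧ r x z then w x * w y * w z else 0
  have hcentered : ∑ x ∈ S, ∑ y ∈ S, ∑ z ∈ S, c x y z ≤ C ^ 2 * ∑ x ∈ S, w x := by
    rw [mul_sum]
    refine sum_le_sum fun x hx => ?_
    have hfactor : ∑ y ∈ S, ∑ z ∈ S, c x y z =
        w x * ((∑ y ∈ S with r x y, w y) * ∑ z ∈ S with r x z, w z) := by
      rw [sum_filter, sum_mul_sum, mul_sum]
      refine sum_congr rfl fun y _ => ?_
      rw [mul_sum]
      refine sum_congr rfl fun z _ => ?_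
      simp only [c]
      split_ifs <;> simp_all [mul_assoc]
    have hnonneg : 0 ≤ ∑ y ∈ S with r x y, w y := sum_nonneg fun y hy => hw y (mem_filter.1 hy).1
    rw [hfactor, mul_comm]
    gcongr
    · exact hw x hx
    · nlinarith [hr x hx]
  have hcenter₂ : ∑ x ∈ S, ∑ y ∈ S, ∑ z ∈ S, c y x z = ∑ x ∈ S, ∑ y ∈ S, ∑ z ∈ S, c x y z :=
    sum_comm
  have hcenter₃ : ∑ x ∈ S, ∑ y ∈ S, ∑ z ∈ S, c z x y = ∑ x ∈ S, ∑ y ∈ S, ∑ z ∈ S, c x y z :=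
    (sum_congr rfl fun _ _ => sum_comm).trans sum_comm
  calc ∑ t ∈ (S ×ˢ S ×ˢ S).filter P, w t.1 * w t.2.1 * w t.2.2
      = ∑ x ∈ S, ∑ y ∈ S, ∑ z ∈ S, if P (x, y, z) then w x * w y * w z else 0 := by
        simp only [sum_filter, sum_product]
    _ ≤ ∑ x ∈ S, ∑ y ∈ S, ∑ z ∈ S, (c x y z + c y x z + c z x y) := by
        refine sum_le_sum fun x hx => sum_le_sum fun y hy => sum_le_sum fun z hz => ?_
        have := hP x hx y hy z hz
        have := mul_nonneg (mul_nonneg (hw x hx) (hw y hy)) (hw z hz)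
        simp only [c, mul_comm (w y) (w x), mul_comm (w z)]
        split_ifs <;> first | linarith | tauto
    _ = 3 * ∑ x ∈ S, ∑ y ∈ S, ∑ z ∈ S, c x y z := by
        simp only [sum_add_distrib, hcenter₂, hcenter₃]
        ring
    _ ≤ 3 * C ^ 2 * ∑ x ∈ S, w x := by
        rw [mul_assoc]
        gcongr

theorem exists_center_of_pairs {α : Type*} {r : α → α → Prop} {P M : α → Prop}
    {x₁ x₂ x₃ x₄ : α} (hPM : ∀ σ τ, P σ → M σ → r τ σ) (hP : ∀ σ τ, P σ → P τ → r τ σ)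
    (hM : ∀ σ τ, M σ → M τ → r τ σ)
    (twoP : (P x₁ ∧ P x₂) ∨ (P x₁ ∧ P x₃) ∨ (P x₁ ∧ P x₄) ∨ (P x₂ ∧ P x₃) ∨ (P x₂ ∧ P x₄) ∨
      (P x₃ ∧ P x₄))
    (twoM : (M x₁ ∧ M x₂) ∨ (M x₁ ∧ M x₃) ∨ (M x₁ ∧ M x₄) ∨ (M x₂ ∧ M x₃) ∨ (M x₂ ∧ M x₄) ∨
      (M x₃ ∧ M x₄)) :
    ((r x₂ x₁ ∨ r x₂ x₄) ∧ (r x₃ x₁ ∨ r x₃ x₄)) ∨ ((r x₁ x₂ ∨ r x₁ x₄) ∧ (r x₃ x₂ ∨ r x₃ x₄)) ∨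
      ((r x₁ x₃ ∨ r x₁ x₄) ∧ (r x₂ x₃ ∨ r x₂ x₄)) := by
  grind

theorem mem_sectorSet {j j₀ : ℕ} {σ : ℕ × ℕ} :
    σ ∈ sectorSet j j₀ ↔ σ.1 ≤ j ∧ σ.2 ≤ j ∧ j ≤ 2 * σ.1 + j₀ ∧ j ≤ 2 * σ.2 + j₀ ∧
      3 * j ≤ 2 * (σ.1 + σ.2) + j₀ := by
  simp only [sectorSet, mem_filter, mem_product, mem_range, Nat.lt_succ_iff, and_assoc]

def twiceDepth (j j₀ : ℕ) (σ : ℕ × ℕ) : ℕ := 2 * (σ.1 + σ.2) + j₀ - 3 * j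

theorem twiceDepth_cast {j j₀ : ℕ} {σ : ℕ × ℕ} (hσ : σ ∈ sectorSet j j₀) :
    (twiceDepth j j₀ σ : ℝ) = 2 * depth j j₀ σ := by
  rw [twiceDepth, depth, Nat.cast_sub (mem_sectorSet.1 hσ).2.2.2.2]
  push_cast
  ring

theorem rpow_neg_depth_le {γ : ℝ} (hγ : 10 ≤ γ) {j j₀ : ℕ} {σ : ℕ × ℕ}
    (hσ : σ ∈ sectorSet j j₀) : γ ^ (-depth j j₀ σ / 4) ≤ (3 / 4 : ℝ) ^ twiceDepth j j₀ σ := by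
  calc γ ^ (-depth j j₀ σ / 4) = (γ ^ (-(1 / 8 : ℝ))) ^ twiceDepth j j₀ σ := by
        rw [← Real.rpow_natCast, ← Real.rpow_mul (by linarith), twiceDepth_cast hσ]
        ring_nf
    _ ≤ (3 / 4 : ℝ) ^ twiceDepth j j₀ σ :=
        pow_le_pow_left₀ (by positivity) (rpow_neg_one_eighth_le hγ) _

theorem sum_sectorSet_le (j j₀ : ℕ) :
    ∑ σ ∈ sectorSet j j₀, (3 / 4 : ℝ) ^ twiceDepth j j₀ σ ≤ 4 * j + 16 := by
  refine sum_pow_le_of_injOn (φ := fun σ => (twiceDepth j j₀ σ, σ.1)) (by positivity) ?_ ?_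
    (hasSum_add_mul_three_quarters_pow j)
  · intro σ hσ τ hτ h
    simp only [mem_coe, mem_sectorSet, Prod.mk.injEq, twiceDepth] at hσ hτ h
    ext <;> omega
  · intro σ hσ
    have := (mem_sectorSet.1 hσ).1
    omega

-- On this band `σ.1 + 1 - c ≤ twiceDepth σ + 2`, so the depth leaves `O(depth)` choices of `σ`.
theorem sum_band_fst_le (j j₀ c : ℕ) :
    ∑ σ ∈ sectorSet j j₀ with c ≤ σ.1 + 1 ∧ 3 * j ≤ 2 * (c + σ.2) + j₀ + 2,
      (3 / 4 : ℝ) ^ twiceDepth j j₀ σ ≤ 24 := by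
  refine sum_pow_le_of_injOn (φ := fun σ => (twiceDepth j j₀ σ, σ.1 + 1 - c))
    (by positivity) ?_ ?_ (hasSum_add_mul_three_quarters_pow 2) |>.trans_eq (by norm_num)
  · intro σ hσ τ hτ h
    simp only [coe_filter, mem_sectorSet, Prod.mk.injEq, twiceDepth, Set.mem_ofPred_eq] at hσ hτ h
    ext <;> omega
  · intro σ hσ
    simp only [mem_filter, mem_sectorSet, twiceDepth] at hσ ⊢
    omega

theorem sum_band_snd_le (j j₀ d : ℕ) :
    ∑ σ ∈ sectorSet j j₀ with d ≤ σ.2 + 1 ∧ 3 * j ≤ 2 * (σ.1 + d) + j₀ + 2,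
      (3 / 4 : ℝ) ^ twiceDepth j j₀ σ ≤ 24 := by
  refine sum_pow_le_of_injOn (φ := fun σ => (twiceDepth j j₀ σ, σ.2 + 1 - d))
    (by positivity) ?_ ?_ (hasSum_add_mul_three_quarters_pow 2) |>.trans_eq (by norm_num)
  · intro σ hσ τ hτ h
    simp only [coe_filter, mem_sectorSet, Prod.mk.injEq, twiceDepth, Set.mem_ofPred_eq] at hσ hτ h
    ext <;> omega
  · intro σ hσ
    simp only [mem_filter, mem_sectorSet, twiceDepth] at hσ ⊢
    omega

theorem admDir.two_near {j a b c d : ℕ} (h : admDir j a b c d) (hc : c ≤ j) (hd : d ≤ j) :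
    let t := min (min a b) (min c d)
    (a ≤ t + 1 ∧ b ≤ t + 1) ∨ (a ≤ t + 1 ∧ c ≤ t + 1) ∨ (a ≤ t + 1 ∧ d ≤ t + 1) ∨
      (b ≤ t + 1 ∧ c ≤ t + 1) ∨ (b ≤ t + 1 ∧ d ≤ t + 1) ∨ (c ≤ t + 1 ∧ d ≤ t + 1) := by
  unfold admDir at h
  split_ifs at h <;> omega

def Tied (τ σ : ℕ × ℕ) : Prop :=
  (σ.1 ≤ τ.1 + 1 ∧ σ.2 ≤ τ.2 + 1) ∨ (σ.1 ≤ τ.1 + 1 ∧ τ.1 ≤ σ.1 + 1) ∨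
    (σ.2 ≤ τ.2 + 1 ∧ τ.2 ≤ σ.2 + 1)

instance : DecidableRel Tied := fun _ _ => by unfold Tied; infer_instance

theorem admissible.exists_center {j : ℕ} {σ₁ σ₂ σ₃ σ₄ : ℕ × ℕ} (h : admissible j σ₁ σ₂ σ₃ σ₄)
    (h₃ : σ₃ ≤ (j, j)) (h₄ : σ₄ ≤ (j, j)) :
    ((Tied σ₂ σ₁ ∨ Tied σ₂ σ₄) ∧ (Tied σ₃ σ₁ ∨ Tied σ₃ σ₄)) ∨
      ((Tied σ₁ σ₂ ∨ Tied σ₁ σ₄) ∧ (Tied σ₃ σ₂ ∨ Tied σ₃ σ₄)) ∨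
      ((Tied σ₁ σ₃ ∨ Tied σ₁ σ₄) ∧ (Tied σ₂ σ₃ ∨ Tied σ₂ σ₄)) := by
  have twoP := h.1.two_near h₃.1 h₄.1
  have twoM := h.2.two_near h₃.2 h₄.2
  set T := min (min σ₁.1 σ₂.1) (min σ₃.1 σ₄.1)
  set U := min (min σ₁.2 σ₂.2) (min σ₃.2 σ₄.2)
  -- Inside the sectors dominating `(T, U)`, one within one of both minima is tied to all others.
  refine exists_center_of_pairs (α := {τ : ℕ × ℕ // T ≤ τ.1 ∧ U ≤ τ.2})
    (r := fun τ σ => Tied τ.1 σ.1) (P := fun σ => σ.1.1 ≤ T + 1) (M := fun σ => σ.1.2 ≤ U + 1)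
    (x₁ := ⟨σ₁, by omega, by omega⟩) (x₂ := ⟨σ₂, by omega, by omega⟩)
    (x₃ := ⟨σ₃, by omega, by omega⟩) (x₄ := ⟨σ₄, by omega, by omega⟩) ?_ ?_ ?_ twoP twoM <;>
  · rintro ⟨σ, hσ⟩ ⟨τ, hτ⟩
    simp only [Tied]
    omega

theorem Tied.mem_band {j j₀ : ℕ} {σ τ : ℕ × ℕ} (h : Tied τ σ) (hσ : σ ∈ sectorSet j j₀)
    (hτ : τ ∈ sectorSet j j₀) :
    (σ.1 ≤ τ.1 + 1 ∧ 3 * j ≤ 2 * (σ.1 + τ.2) + j₀ + 2) ∨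
      (σ.2 ≤ τ.2 + 1 ∧ 3 * j ≤ 2 * (τ.1 + σ.2) + j₀ + 2) := by
  rw [mem_sectorSet] at hσ hτ
  unfold Tied at h
  omega

theorem sum_tied_le {j j₀ : ℕ} {σ : ℕ × ℕ} (hσ : σ ∈ sectorSet j j₀) :
    ∑ τ ∈ sectorSet j j₀ with Tied τ σ, (3 / 4 : ℝ) ^ twiceDepth j j₀ τ ≤ 48 := by
  calc ∑ τ ∈ sectorSet j j₀ with Tied τ σ, (3 / 4 : ℝ) ^ twiceDepth j j₀ τ
      ≤ ∑ τ ∈ sectorSet j j₀ with (σ.1 ≤ τ.1 + 1 ∧ 3 * j ≤ 2 * (σ.1 + τ.2) + j₀ + 2) ∨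
          (σ.2 ≤ τ.2 + 1 ∧ 3 * j ≤ 2 * (τ.1 + σ.2) + j₀ + 2), (3 / 4 : ℝ) ^ twiceDepth j j₀ τ :=
        sum_le_sum_of_subset_of_nonneg (monotone_filter_right _ fun τ hτ h => h.mem_band hσ hτ)
          fun _ _ _ => by positivity
    _ ≤ 24 + 24 := (sum_filter_or_le (fun _ _ => by positivity) _ _).trans
          (add_le_add (sum_band_fst_le j j₀ σ.1) (sum_band_snd_le j j₀ σ.2))
    _ = 48 := by norm_num

/-- Sector counting lemma for a single bare vertex (Lemma 3.2): with `σ₄` fixed, the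
sum over admissible `(σ₁, σ₂, σ₃)` of `γ^(−(l(σ₁)+l(σ₂)+l(σ₃))/4)` is `O(j + j₀ + 1)`. -/
theorem sector_counting_single_vertex :
    ∃ K : ℝ, 0 < K ∧ ∀ γ : ℝ, 10 ≤ γ → ∀ j j₀ : ℕ, 1 ≤ j →
      ∀ σ₄ ∈ sectorSet j j₀,
        ∑ t ∈ (sectorSet j j₀ ×ˢ sectorSet j j₀ ×ˢ sectorSet j j₀).filter
            (fun t => admissible j t.1 t.2.1 t.2.2 σ₄),
          γ ^ (-(depth j j₀ t.1 + depth j j₀ t.2.1 + depth j j₀ t.2.2) / 4)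
        ≤ K * ((j : ℝ) + (j₀ : ℝ) + 1) := by
  refine ⟨3 * 96 ^ 2 * 16, by norm_num, fun γ hγ j j₀ _ σ₄ h₄ => ?_⟩
  set S := sectorSet j j₀
  set w : ℕ × ℕ → ℝ := fun σ => (3 / 4 : ℝ) ^ twiceDepth j j₀ σ
  have hle : ∀ σ ∈ S, σ ≤ (j, j) := fun σ hσ => ⟨(mem_sectorSet.1 hσ).1, (mem_sectorSet.1 hσ).2.1⟩
  calc _ ≤ ∑ t ∈ (S ×ˢ S ×ˢ S).filter (fun t => admissible j t.1 t.2.1 t.2.2 σ₄),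
          w t.1 * w t.2.1 * w t.2.2 := by
        refine sum_le_sum fun t ht => ?_
        obtain ⟨⟨h₁, h₂, h₃⟩, -⟩ := by simpa only [mem_filter, mem_product] using ht
        rw [neg_add, neg_add, add_div, add_div, Real.rpow_add (by linarith),
          Real.rpow_add (by linarith)]
        gcongr <;> exact rpow_neg_depth_le hγ ‹_›
    _ ≤ 3 * (48 + 48) ^ 2 * ∑ σ ∈ S, w σ := by
        refine sum_triple_le_of_exists_center (r := fun σ τ => Tied τ σ ∨ Tied τ σ₄)
          (fun _ _ => by positivity) (fun σ hσ => ?_)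
          fun σ₁ _ σ₂ _ σ₃ h₃ h => h.exists_center (hle σ₃ h₃) (hle σ₄ h₄)
        exact (sum_filter_or_le (fun _ _ => by positivity) _ _).trans
          (add_le_add (sum_tied_le hσ) (sum_tied_le h₄))
    _ ≤ 3 * (48 + 48) ^ 2 * (4 * j + 16) := by gcongr; exact sum_sectorSet_le j j₀
    _ ≤ 3 * 96 ^ 2 * 16 * ((j : ℝ) + (j₀ : ℝ) + 1) := by
        have : (0 : ℝ) ≤ j₀ := j₀.cast_nonneg
        nlinarith
end
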